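/- arXiv:1401.1239 — 4 statements merged into one kernel-verified Lean document; each statement's English description precedes it below -/
import Mathlib

section
/- For P > 0, 0 < N1 ≤ N3, and α1, α2 ≥ 0 with α1+α2 = 1: C(α1·P/N1) + C(α2·P/(α1·P+N3)) ≤ C(P/N1), with equality if and only if α2 = 0 or N1 = N3, where C(q) = (1/2)·log(1+q). -/
noncomputable def C (q : ℝ) : ℝ := (1/2) * Real.log (1 + q)

theorem stmt5 (P N1 N3 α1 α2 : ℝ)
    (hP : 0 < P) (hN1 : 0 < N1) (h13 : N1 ≤ N3)
    (hα1 : 0 ≤ α1) (hα2 : 0 ≤ α2) (hsum : α1 + α2 = 1) :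
    C (α1 * P / N1) + C (α2 * P / (α1 * P + N3)) ≤ C (P / N1) ∧
    (C (α1 * P / N1) + C (α2 * P / (α1 * P + N3)) = C (P / N1) ↔
      α2 = 0 ∨ N1 = N3) := by
  have hN3 : 0 < N3 := lt_of_lt_of_le hN1 h13
  have hx : 0 < α1 * P + N3 := by positivity
  have ha : 0 < 1 + α1 * P / N1 := by positivity
  have hb : 0 < 1 + α2 * P / (α1 * P + N3) := by positivity
  have hw : 0 < 1 + P / N1 := by positivity
  have key : (1 + P / N1) - (1 + α1 * P / N1) * (1 + α2 * P / (α1 * P + N3))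
      = P * α2 * (N3 - N1) / (N1 * (α1 * P + N3)) := by
    have h1 : α1 = 1 - α2 := by linarith
    subst h1
    field_simp
    ring
  have hq : 0 ≤ P * α2 * (N3 - N1) / (N1 * (α1 * P + N3)) := by
    apply div_nonneg _ (by positivity)
    have : 0 ≤ N3 - N1 := by linarith
    positivity
  have hle : (1 + α1 * P / N1) * (1 + α2 * P / (α1 * P + N3)) ≤ 1 + P / N1 := by
    linarith [key]
  have hsumlog : C (α1 * P / N1) + C (α2 * P / (α1 * P + N3))
      = (1/2) * Real.log ((1 + α1 * P / N1) * (1 + α2 * P / (α1 * P + N3))) := by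
    rw [C, C, Real.log_mul ha.ne' hb.ne']
    ring
  constructor
  · rw [hsumlog, C]
    have := Real.log_le_log (by positivity) hle
    linarith
  · constructor
    · intro h
      rw [hsumlog, C] at h
      have hlog : Real.log ((1 + α1 * P / N1) * (1 + α2 * P / (α1 * P + N3)))
          = Real.log (1 + P / N1) := by linarith
      have heq : (1 + α1 * P / N1) * (1 + α2 * P / (α1 * P + N3)) = 1 + P / N1 := by
        have := congrArg Real.exp hlog
        rwa [Real.exp_log (by positivity), Real.exp_log hw] at this
      have hnum : P * α2 * (N3 - N1) = 0 := by
        have hd : P * α2 * (N3 - N1) / (N1 * (α1 * P + N3)) = 0 := by linarith [key]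
        have hdne : (N1 * (α1 * P + N3)) ≠ 0 := by positivity
        rcases div_eq_zero_iff.mp hd with h | h
        · exact h
        · exact absurd h hdne
      rcases mul_eq_zero.mp hnum with h | h
      · rcases mul_eq_zero.mp h with h | h
        · exact absurd h hP.ne'
        · exact Or.inl h
      · right; linarith
    · intro h
      have hnum : P * α2 * (N3 - N1) = 0 := by
        rcases h with h | h
        · rw [h]; ring
        · rw [h]; ring
      have heq : (1 + α1 * P / N1) * (1 + α2 * P / (α1 * P + N3)) = 1 + P / N1 := by
        have : P * α2 * (N3 - N1) / (N1 * (α1 * P + N3)) = 0 := by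
          rw [hnum]; simp
        linarith [key]
      rw [hsumlog, heq, C]
end

section
/- Let P > 0 and 0 < N1 ≤ N2 ≤ N3. The region {(R1,R2,R3) ∈ ℝ³≥0 : ∃ α ∈ [0,1], R1+R2 < C(P/N1), R2+R3 < C(P/N2), R3 < C((1−α)P/(αP+N3)), R1 < C(αP/N1), R1+R2+R3 < C(P/N1)} is contained in the polyhedron {R1+R2+R3 < C(P/N1), R2+R3 < C(P/N2), R3 < C(P/N3)}. -/
lemma C_mono {x y : ℝ} (hx : -1 < x) (hxy : x ≤ y) : C x ≤ C y := by
  unfold C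
  have : Real.log (1 + x) ≤ Real.log (1 + y) :=
    Real.log_le_log (by linarith) (by linarith)
  linarith

theorem stmt8 (P N1 N2 N3 : ℝ)
    (hP : 0 < P) (hN1 : 0 < N1) (h12 : N1 ≤ N2) (h23 : N2 ≤ N3) :
    {R : ℝ × ℝ × ℝ | 0 ≤ R.1 ∧ 0 ≤ R.2.1 ∧ 0 ≤ R.2.2 ∧
      ∃ α ∈ Set.Icc (0:ℝ) 1,
        R.1 + R.2.1 < C (P / N1) ∧
        R.2.1 + R.2.2 < C (P / N2) ∧
        R.2.2 < C ((1 - α) * P / (α * P + N3)) ∧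
        R.1 < C (α * P / N1) ∧
        R.1 + R.2.1 + R.2.2 < C (P / N1)} ⊆
    {R : ℝ × ℝ × ℝ |
        R.1 + R.2.1 + R.2.2 < C (P / N1) ∧
        R.2.1 + R.2.2 < C (P / N2) ∧
        R.2.2 < C (P / N3)} := by
  rintro ⟨R1, R2, R3⟩ ⟨h1, h2, h3, α, ⟨hα0, hα1⟩, hA, hB, hC, hD, hE⟩
  have hN3 : 0 < N3 := lt_of_lt_of_le hN1 (h12.trans h23)
  have hden : 0 < α * P + N3 := by nlinarith
  refine ⟨hE, hB, lt_of_lt_of_le hC (C_mono ?_ ?_)⟩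
  · have : 0 ≤ (1 - α) * P / (α * P + N3) :=
      div_nonneg (by nlinarith) hden.le
    linarith
  · rw [div_le_div_iff₀ hden hN3]
    nlinarith [mul_nonneg hα0 (mul_pos hP hN3).le, mul_nonneg hα0 (mul_pos hP hP).le]
end

section
/- Let P > 0 and 0 < N1 ≤ N2 ≤ N3, with N1 < N3 strictly. Then there exists α ∈ (0,1) and a rate triple (R1,R2,R3) satisfying R1 < C(αP/N1), R2 < C(P/N2), R3 < C((1−α)P/(αP+N3)), R1 + max(R2,R3) < C(P/N1), which violates the inequality R1+R2+R3 < C(P/N1). -/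
theorem stmt10 (P N1 N2 N3 : ℝ)
    (hP : 0 < P) (hN1 : 0 < N1) (h12 : N1 ≤ N2) (h23 : N2 ≤ N3) (h13 : N1 < N3) :
    ∃ α ∈ Set.Ioo (0:ℝ) 1, ∃ R1 R2 R3 : ℝ,
      R1 < C (α * P / N1) ∧
      R2 < C (P / N2) ∧
      R3 < C ((1 - α) * P / (α * P + N3)) ∧
      R1 + max R2 R3 < C (P / N1) ∧
      ¬ (R1 + R2 + R3 < C (P / N1)) := by
  have hN2 : 0 < N2 := lt_of_lt_of_le hN1 h12
  have hN3 : 0 < N3 := lt_of_lt_of_le hN2 h23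
  -- R2 value
  set B := C (P / N2) with hB
  have hBpos : 0 < B := by
    have : (0:ℝ) < P / N2 := div_pos hP hN2
    have h1 : (1:ℝ) < 1 + P / N2 := by linarith
    exact mul_pos (by norm_num) (Real.log_pos h1)
  set R2v := B / 2 with hR2v
  have hR2pos : 0 < R2v := by positivity
  have hR2lt : R2v < B := by simp [hR2v]; linarith
  -- choose α
  set u : ℝ := ((1 + P / N1) * Real.exp (-(2 * R2v)) - 1) * (N1 / P) with hu
  have hPN1 : 0 < P / N1 := div_pos hP hN1
  have hexp : Real.exp (-(2 * R2v)) < 1 := by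
    rw [Real.exp_lt_one_iff]; linarith
  have hexppos : 0 < Real.exp (-(2 * R2v)) := Real.exp_pos _
  have hu1 : u < 1 := by
    have h1 : (1 + P / N1) * Real.exp (-(2 * R2v)) < 1 + P / N1 := by
      nlinarith
    have h2 : (1 + P / N1) * Real.exp (-(2 * R2v)) - 1 < P / N1 := by linarith
    have h3 : 0 < N1 / P := div_pos hN1 hP
    calc u < (P / N1) * (N1 / P) := by
            rw [hu]; exact mul_lt_mul_of_pos_right h2 h3
      _ = 1 := by field_simp
  set α : ℝ := (max u 0 + 1) / 2 with hα
  have hα0 : 0 < α := by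
    have := le_max_right u 0
    rw [hα]; linarith
  have hα1 : α < 1 := by
    have : max u 0 < 1 := max_lt hu1 (by norm_num)
    rw [hα]; linarith
  have hαu : u < α := by
    have h1 : u ≤ max u 0 := le_max_left u 0
    have : max u 0 < 1 := max_lt hu1 (by norm_num)
    rw [hα]; linarith
  -- key inequality : C (P/N1) - R2v < C (α*P/N1)
  have hkey : C (P / N1) - R2v < C (α * P / N1) := by
    have hs : (1 + P / N1) * Real.exp (-(2 * R2v)) < 1 + α * P / N1 := by
      have h1 : u * (P / N1) < α * (P / N1) := mul_lt_mul_of_pos_right hαu hPN1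
      have h2 : u * (P / N1) = (1 + P / N1) * Real.exp (-(2 * R2v)) - 1 := by
        rw [hu]; field_simp
      have h3 : α * (P / N1) = α * P / N1 := by ring
      rw [h2, h3] at h1; linarith
    have hspos : 0 < (1 + P / N1) * Real.exp (-(2 * R2v)) := by positivity
    have hlog : Real.log ((1 + P / N1) * Real.exp (-(2 * R2v))) <
        Real.log (1 + α * P / N1) := Real.log_lt_log hspos hs
    rw [Real.log_mul (by positivity) (ne_of_gt hexppos), Real.log_exp] at hlog
    simp only [C]
    linarith
  -- C3 positive
  have hC3pos : 0 < C ((1 - α) * P / (α * P + N3)) := by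
    have hq : 0 < (1 - α) * P / (α * P + N3) := by
      apply div_pos (mul_pos (by linarith) hP)
      positivity
    exact mul_pos (by norm_num) (Real.log_pos (by linarith))
  set C3 := C ((1 - α) * P / (α * P + N3)) with hC3
  set r := min C3 R2v / 2 with hr
  have hrpos : 0 < r := by
    rw [hr]; positivity
  have hrC3 : r < C3 := by
    have h1 := min_le_left C3 R2v
    have h2 := lt_min hC3pos hR2pos
    rw [hr]; linarith
  have hrR2 : r < R2v := by
    have h1 : min C3 R2v ≤ R2v := min_le_right _ _
    have h2 : 0 < min C3 R2v := lt_min hC3pos hR2pos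
    rw [hr]; linarith
  refine ⟨α, ⟨hα0, hα1⟩, C (P / N1) - R2v - r, R2v, r, ?_, ?_, ?_, ?_, ?_⟩
  · linarith
  · exact hR2lt
  · exact hrC3
  · rw [max_eq_left hrR2.le]; linarith
  · intro h; linarith
end

section
/- Let P > 0, 0 < N1 ≤ N2 ≤ N3. The closure of the union over α ∈ [0,1] of the regions {(R1,R2,R3) ≥ 0 : R1 ≤ C(αP/N1), R2+R3 ≤ C((1−α)P/(αP+N2)), R3 ≤ C((1−α)P/(αP+N3))} is contained in {(R1,R2,R3) ≥ 0 : R1+R2+R3 ≤ C(P/N1), R2+R3 ≤ C(P/N2), R3 ≤ C(P/N3)}. -/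
lemma C_mono_s15 {q q' : ℝ} (hq : 0 ≤ q) (h : q ≤ q') : C q ≤ C q' := by
  unfold C
  gcongr

lemma C_add_le {a b c : ℝ} (ha : 0 ≤ a) (hb : 0 ≤ b)
    (h : (1 + a) * (1 + b) ≤ 1 + c) : C a + C b ≤ C c := by
  unfold C
  rw [← mul_add, ← Real.log_mul (by linarith) (by linarith)]
  gcongr

theorem stmt15 (P N1 N2 N3 : ℝ)
    (hP : 0 < P) (hN1 : 0 < N1) (h12 : N1 ≤ N2) (h23 : N2 ≤ N3) :
    closure (⋃ α ∈ Set.Icc (0:ℝ) 1,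
      {R : ℝ × ℝ × ℝ | 0 ≤ R.1 ∧ 0 ≤ R.2.1 ∧ 0 ≤ R.2.2 ∧
        R.1 ≤ C (α * P / N1) ∧
        R.2.1 + R.2.2 ≤ C ((1 - α) * P / (α * P + N2)) ∧
        R.2.2 ≤ C ((1 - α) * P / (α * P + N3))}) ⊆
    {R : ℝ × ℝ × ℝ | 0 ≤ R.1 ∧ 0 ≤ R.2.1 ∧ 0 ≤ R.2.2 ∧
        R.1 + R.2.1 + R.2.2 ≤ C (P / N1) ∧
        R.2.1 + R.2.2 ≤ C (P / N2) ∧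
        R.2.2 ≤ C (P / N3)} := by
  have hN2 : (0:ℝ) < N2 := lt_of_lt_of_le hN1 h12
  have hN3 : (0:ℝ) < N3 := lt_of_lt_of_le hN2 h23
  apply closure_minimal
  · rintro R hR
    simp only [Set.mem_iUnion, Set.mem_Icc] at hR
    obtain ⟨α, ⟨hα0, hα1⟩, h1, h2, h3, h4, h5, h6⟩ := hR
    have hd2 : (0:ℝ) < α * P + N2 := by nlinarith
    have hd3 : (0:ℝ) < α * P + N3 := by nlinarith
    have ha : 0 ≤ α * P / N1 := by positivity
    have hb2 : 0 ≤ (1 - α) * P / (α * P + N2) := by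
      apply div_nonneg (by nlinarith) hd2.le
    have hb3 : 0 ≤ (1 - α) * P / (α * P + N3) := by
      apply div_nonneg (by nlinarith) hd3.le
    refine ⟨h1, h2, h3, ?_, ?_, ?_⟩
    · have key : C (α * P / N1) + C ((1 - α) * P / (α * P + N2)) ≤ C (P / N1) := by
        apply C_add_le ha hb2
        have e1 : 1 + α * P / N1 = (N1 + α * P) / N1 := by field_simp
        have e2 : 1 + (1 - α) * P / (α * P + N2) = (α * P + N2 + (1 - α) * P) / (α * P + N2) := by
          field_simp
        have e3 : 1 + P / N1 = (N1 + P) / N1 := by field_simp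
        rw [e1, e2, e3, div_mul_div_comm, div_le_div_iff₀ (by positivity) hN1]
        nlinarith [mul_nonneg (mul_nonneg (sub_nonneg.2 hα1) hP.le) (sub_nonneg.2 h12)]
      linarith
    · have : (1 - α) * P / (α * P + N2) ≤ P / N2 := by
        rw [div_le_div_iff₀ hd2 hN2]
        nlinarith [mul_nonneg hα0 (mul_nonneg hP.le hP.le), mul_nonneg hα0 (mul_nonneg hP.le hN2.le)]
      linarith [C_mono_s15 hb2 this]
    · have : (1 - α) * P / (α * P + N3) ≤ P / N3 := by
        rw [div_le_div_iff₀ hd3 hN3]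
        nlinarith [mul_nonneg hα0 (mul_nonneg hP.le hP.le), mul_nonneg hα0 (mul_nonneg hP.le hN3.le)]
      linarith [C_mono_s15 hb3 this]
  · have : {R : ℝ × ℝ × ℝ | 0 ≤ R.1 ∧ 0 ≤ R.2.1 ∧ 0 ≤ R.2.2 ∧
        R.1 + R.2.1 + R.2.2 ≤ C (P / N1) ∧
        R.2.1 + R.2.2 ≤ C (P / N2) ∧
        R.2.2 ≤ C (P / N3)} =
      {R : ℝ × ℝ × ℝ | 0 ≤ R.1} ∩ {R | 0 ≤ R.2.1} ∩ {R | 0 ≤ R.2.2} ∩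
      {R | R.1 + R.2.1 + R.2.2 ≤ C (P / N1)} ∩ {R | R.2.1 + R.2.2 ≤ C (P / N2)} ∩
      {R | R.2.2 ≤ C (P / N3)} := by
      ext R; simp [Set.mem_inter_iff, and_assoc]
    rw [this]
    refine (((((isClosed_le (by fun_prop) (by fun_prop)).inter
      (isClosed_le (by fun_prop) (by fun_prop))).inter
      (isClosed_le (by fun_prop) (by fun_prop))).inter
      (isClosed_le (by fun_prop) (by fun_prop))).inter
      (isClosed_le (by fun_prop) (by fun_prop))).inter
      (isClosed_le (by fun_prop) (by fun_prop))
end
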